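/- Let β and γ be linear maps on real sequences. The operator R(ω,x) = (βx, γx) is bounded on Z₂ if and only if γ restricts to a bounded operator on ℓ² and β − KP∘γ is bounded from ℓ² to ℓ² (for every x ∈ ℓ², γx ∈ ℓ², βx − KP(γx) ∈ ℓ², and ‖βx − KP(γx)‖₂ ≤ C‖x‖₂ for some constant C). In particular, (ω,x) ↦ (βx, 0) is bounded on Z₂ if and only if β restricts to a bounded operator on ℓ², and (ω,x) ↦ (0, γx) is bounded on Z₂ if and only if γ is bounded from ℓ² to ℓ_f (for every x ∈ ℓ², γx ∈ ℓ², KP(γx) ∈ ℓ², and ‖KP(γx)‖₂ + ‖γx‖₂ ≤ C‖x‖₂). -/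

import Mathlib

open scoped BigOperators

noncomputable section

/-- Real sequences. -/
abbrev RSeq : Type := ℕ → ℝ

/-- Membership in ℓ². -/
def memL2 (x : RSeq) : Prop := Summable (fun n => (x n) ^ 2)

/-- The ℓ² norm. -/
noncomputable def l2norm (x : RSeq) : ℝ := Real.sqrt (∑' n, (x n) ^ 2)

/-- The Kalton–Peck map, defined coordinatewise.  (In Lean, `Real.log 0 = 0` and
division by zero is zero, so the conventions `0·log 0 = 0` and `KP 0 = 0` hold.) -/
noncomputable def KP (x : RSeq) : RSeq := fun n => 2 * x n * Real.log (|x n| / l2norm x)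

/-- Membership in the Kalton–Peck space Z₂. -/
def memZ2 (u : RSeq × RSeq) : Prop := memL2 u.2 ∧ memL2 (u.1 - KP u.2)

/-- The Z₂ quasinorm. -/
noncomputable def Z2norm (u : RSeq × RSeq) : ℝ := l2norm (u.1 - KP u.2) + l2norm u.2

/-- A map on pairs of sequences is bounded on Z₂. -/
def BoundedOnZ2 (T : RSeq × RSeq → RSeq × RSeq) : Prop :=
  (∀ u, memZ2 u → memZ2 (T u)) ∧ ∃ C : ℝ, ∀ u, memZ2 u → Z2norm (T u) ≤ C * Z2norm u

/-- The matrix operator associated to four linear maps on sequences. -/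
def matOp (α β δ γ : RSeq →ₗ[ℝ] RSeq) : RSeq × RSeq → RSeq × RSeq :=
  fun u => (α u.1 + β u.2, δ u.1 + γ u.2)

/-- Membership in the Orlicz space ℓ_f = Dom KP. -/
def memLf (x : RSeq) : Prop := memL2 x ∧ memL2 (KP x)

/-- The ℓ_f quasinorm. -/
noncomputable def lfNorm (x : RSeq) : ℝ := l2norm (KP x) + l2norm x

/-- Membership in ℓ_f* = Ran KP. -/
def memLfStar (ω : RSeq) : Prop := ∃ x : RSeq, memL2 x ∧ memL2 (ω - KP x)

/-- The ℓ_f* quasinorm. -/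
noncomputable def lfStarNorm (ω : RSeq) : ℝ :=
  sInf {r : ℝ | ∃ x : RSeq, memL2 x ∧ memL2 (ω - KP x) ∧ r = l2norm (ω - KP x) + l2norm x}

/-- A bounded map on Z₂ is strictly singular if every linear subspace of Z₂ on which it is
bounded below is finite dimensional. -/
def StrictlySingular (T : RSeq × RSeq → RSeq × RSeq) : Prop :=
  ∀ V : Submodule ℝ (RSeq × RSeq), (∀ v ∈ V, memZ2 v) →
    (∃ c > 0, ∀ v ∈ V, c * Z2norm v ≤ Z2norm (T v)) → FiniteDimensional ℝ V

/-- A set of sequences is totally bounded (relatively compact) for the ℓ² norm. -/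
def l2TotallyBounded (A : Set RSeq) : Prop :=
  ∀ ε > 0, ∃ S : Set RSeq, S.Finite ∧
    ∀ a ∈ A, ∃ s ∈ S, memL2 (a - s) ∧ l2norm (a - s) < ε

/-- A map on Z₂ is compact if the image of the unit ball is totally bounded for the
Z₂ quasinorm. -/
def CompactOnZ2 (T : RSeq × RSeq → RSeq × RSeq) : Prop :=
  ∀ ε > 0, ∃ S : Set (RSeq × RSeq), S.Finite ∧
    ∀ u, memZ2 u → Z2norm u ≤ 1 → ∃ s ∈ S, memZ2 (T u - s) ∧ Z2norm (T u - s) < ε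

/-!
A map `u ↦ F u.2` sees only the second coordinate `x` of `u = (ω, x)`, and `Z₂`-points
with a given `x` have quasinorm at least `‖x‖₂`, with equality at `(KP x, x)`. So such a map
is bounded on `Z₂` exactly when `x ↦ F x` is bounded from `ℓ²` to `Z₂`, and for the three
operators in question the `Z₂`-quasinorm of `F x` splits into the two quantities to be bounded.
-/

lemma l2norm_nonneg (x : RSeq) : 0 ≤ l2norm x := Real.sqrt_nonneg _

lemma memL2_zero : memL2 (0 : RSeq) := by
  simp [memL2, summable_zero]

lemma l2norm_zero : l2norm (0 : RSeq) = 0 := by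
  simp [l2norm]

lemma memL2_neg_iff {x : RSeq} : memL2 (-x) ↔ memL2 x := by
  simp [memL2]

lemma l2norm_neg (x : RSeq) : l2norm (-x) = l2norm x := by
  simp [l2norm]

lemma KP_zero : KP (0 : RSeq) = 0 := by
  funext n; simp [KP]

lemma Z2norm_mk (ω x : RSeq) : Z2norm (ω, x) = l2norm (ω - KP x) + l2norm x := rfl

lemma memZ2_KP_self {x : RSeq} (hx : memL2 x) : memZ2 (KP x, x) :=
  ⟨hx, by simpa using memL2_zero⟩

lemma Z2norm_KP_self (x : RSeq) : Z2norm (KP x, x) = l2norm x := by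
  simp [Z2norm, l2norm_zero]

lemma l2norm_snd_le_Z2norm (u : RSeq × RSeq) : l2norm u.2 ≤ Z2norm u :=
  le_add_of_nonneg_left (l2norm_nonneg _)

lemma memZ2_snd_zero_iff {ω : RSeq} : memZ2 (ω, 0) ↔ memL2 ω := by
  simp [memZ2, KP_zero, memL2_zero]

lemma Z2norm_snd_zero (ω : RSeq) : Z2norm (ω, 0) = l2norm ω := by
  simp [Z2norm, KP_zero, l2norm_zero]

lemma memZ2_fst_zero_iff {x : RSeq} : memZ2 (0, x) ↔ memLf x := by
  simp [memZ2, memLf, memL2_neg_iff]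

lemma Z2norm_fst_zero (x : RSeq) : Z2norm (0, x) = lfNorm x := by
  simp [Z2norm, lfNorm, l2norm_neg]

theorem boundedOnZ2_comp_snd_iff (F : RSeq → RSeq × RSeq) :
    BoundedOnZ2 (fun u => F u.2) ↔
      ∃ C : ℝ, ∀ x, memL2 x → memZ2 (F x) ∧ Z2norm (F x) ≤ C * l2norm x := by
  constructor
  · rintro ⟨hmem, C, hC⟩
    refine ⟨C, fun x hx => ⟨hmem (KP x, x) (memZ2_KP_self hx), ?_⟩⟩
    simpa only [Z2norm_KP_self] using hC (KP x, x) (memZ2_KP_self hx)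
  · rintro ⟨C, hC⟩
    refine ⟨fun u hu => (hC u.2 hu.1).1, max C 0, fun u hu => ?_⟩
    calc Z2norm (F u.2) ≤ C * l2norm u.2 := (hC u.2 hu.1).2
      _ ≤ max C 0 * l2norm u.2 :=
        mul_le_mul_of_nonneg_right (le_max_left C 0) (l2norm_nonneg _)
      _ ≤ max C 0 * Z2norm u :=
        mul_le_mul_of_nonneg_left (l2norm_snd_le_Z2norm u) (le_max_right C 0)

lemma exists_bound_and_add_iff {ι : Type*} {R P Q : ι → Prop} {a b n : ι → ℝ}
    (ha : ∀ i, 0 ≤ a i) (hb : ∀ i, 0 ≤ b i) :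
    (∃ C : ℝ, ∀ i, R i → (P i ∧ Q i) ∧ a i + b i ≤ C * n i) ↔
      (∃ C : ℝ, ∀ i, R i → P i ∧ a i ≤ C * n i) ∧
        (∃ C : ℝ, ∀ i, R i → Q i ∧ b i ≤ C * n i) := by
  constructor
  · rintro ⟨C, hC⟩
    refine ⟨⟨C, fun i hi => ⟨(hC i hi).1.1, ?_⟩⟩, ⟨C, fun i hi => ⟨(hC i hi).1.2, ?_⟩⟩⟩
    · linarith [(hC i hi).2, hb i]
    · linarith [(hC i hi).2, ha i]
  · rintro ⟨⟨C₁, h₁⟩, ⟨C₂, h₂⟩⟩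
    refine ⟨C₁ + C₂, fun i hi => ⟨⟨(h₁ i hi).1, (h₂ i hi).1⟩, ?_⟩⟩
    linarith [(h₁ i hi).2, (h₂ i hi).2]

/-- R(ω,x) = (βx, γx) is bounded on Z₂ iff γ restricts to a bounded operator
on ℓ² and β − KP∘γ is bounded from ℓ² to ℓ².  In particular (ω,x) ↦ (βx, 0) is bounded iff
β restricts to a bounded operator on ℓ², and (ω,x) ↦ (0, γx) is bounded iff γ is bounded
from ℓ² to ℓ_f. -/
theorem stmt_13 (β γ : RSeq →ₗ[ℝ] RSeq) :
    (BoundedOnZ2 (fun u : RSeq × RSeq => (β u.2, γ u.2)) ↔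
      (∃ C : ℝ, ∀ x : RSeq, memL2 x → memL2 (γ x) ∧ l2norm (γ x) ≤ C * l2norm x) ∧
      (∃ C : ℝ, ∀ x : RSeq, memL2 x →
        memL2 (β x - KP (γ x)) ∧ l2norm (β x - KP (γ x)) ≤ C * l2norm x)) ∧
    (BoundedOnZ2 (fun u : RSeq × RSeq => (β u.2, (0 : RSeq))) ↔
      ∃ C : ℝ, ∀ x : RSeq, memL2 x → memL2 (β x) ∧ l2norm (β x) ≤ C * l2norm x) ∧
    (BoundedOnZ2 (fun u : RSeq × RSeq => ((0 : RSeq), γ u.2)) ↔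
      ∃ C : ℝ, ∀ x : RSeq, memL2 x →
        memL2 (γ x) ∧ memL2 (KP (γ x)) ∧
        l2norm (KP (γ x)) + l2norm (γ x) ≤ C * l2norm x) := by
  refine ⟨?_, ?_, ?_⟩
  · rw [boundedOnZ2_comp_snd_iff (fun x => (β x, γ x)),
      ← exists_bound_and_add_iff (fun _ => l2norm_nonneg _) (fun _ => l2norm_nonneg _)]
    simp only [memZ2, Z2norm_mk, add_comm]
  · rw [boundedOnZ2_comp_snd_iff (fun x => (β x, 0))]
    simp only [memZ2_snd_zero_iff, Z2norm_snd_zero]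
  · rw [boundedOnZ2_comp_snd_iff (fun x => (0, γ x))]
    simp only [memZ2_fst_zero_iff, Z2norm_fst_zero, memLf, lfNorm, and_assoc]
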